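/- arXiv:math/0211304 — 4 statements merged into one kernel-verified Lean document; each statement's English description precedes it below -/
import Mathlib

section
/- In ℂ[s,t,x,y] the polynomials a₁,…,a₅ satisfy the cubic relation a₃² − a₁a₃a₄ + a₂a₄² + a₁²a₅ − 4a₂a₅ = 0 (this is the affine form, with a₆ = 1, of the cubic hypersurface F ⊂ ℙ⁵ cut out by the image of the map φ of Lemma 3.1; it is the equation (3) of the paper with the misprinted term a₁²a₄ corrected to a₁²a₅). -/
/-! In terms of the sums `p = s + x`, `q = t + y` and the products `u = s x`, `v = t y` of the
pairs `{s, x}` and `{t, y}` one has `a₁ = p + q`, `a₂ = p q`, `a₃ = u q + v p`, `a₄ = u + v`,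
`a₅ = u v`, and the cubic vanishes identically in the four independent quantities `p, q, u, v`. -/
noncomputable section
namespace Koike

open MvPolynomial

abbrev R4 : Type := MvPolynomial (Fin 4) ℂ

def s : R4 := X 0
def t : R4 := X 1
def x : R4 := X 2
def y : R4 := X 3

/-- the imaginary unit as a constant polynomial -/
def i : R4 := C Complex.I

def a1 : R4 := s + t + x + y
def a2 : R4 := s*t + t*x + x*y + y*s
def a3 : R4 := t*x*y + s*x*y + s*t*y + s*t*x
def a4 : R4 := s*x + t*y
def a5 : R4 := s*t*x*y
def a6 : R4 := 1

def b1 : R4 := s - t + x - y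
def b2 : R4 := s*t - t*x + x*y - y*s
def b3 : R4 := t*x*y - s*x*y + s*t*y - s*t*x
def b4 : R4 := s*x - t*y

def c1 : R4 := s - i*t - x + i*y
def c2 : R4 := s*t - i*(t*x) - x*y + i*(y*s)
def c3 : R4 := t*x*y - i*(s*x*y) - s*t*y + i*(s*t*x)

def d1 : R4 := s + i*t - x - i*y
def d2 : R4 := s*t + i*(t*x) - x*y - i*(y*s)
def d3 : R4 := t*x*y + i*(s*x*y) - s*t*y - i*(s*t*x)

/-- the pullback `σ* : ℂ[s,t,x,y] → ℂ[s,t,x,y]`, determined by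
`s ↦ y, t ↦ s, x ↦ t, y ↦ x`. -/
def sigmaStar : R4 →ₐ[ℂ] R4 := aeval ![y, s, t, x]

/-- the pullback `τ* : ℂ[s,t,x,y] → ℂ[s,t,x,y]`, determined by
`s ↦ x, t ↦ t, x ↦ s, y ↦ y`. -/
def tauStar : R4 →ₐ[ℂ] R4 := aeval ![x, t, s, y]

theorem cubic_relation_of_pairs {R : Type*} [CommRing R] {a₁ a₂ a₃ a₄ a₅ : R} (p q u v : R)
    (h₁ : a₁ = p + q) (h₂ : a₂ = p * q) (h₃ : a₃ = u * q + v * p) (h₄ : a₄ = u + v)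
    (h₅ : a₅ = u * v) :
    a₃ ^ 2 - a₁ * a₃ * a₄ + a₂ * a₄ ^ 2 + a₁ ^ 2 * a₅ - 4 * a₂ * a₅ = 0 := by
  subst_vars
  ring

theorem a1_eq_pair_sums : a1 = (s + x) + (t + y) := by
  unfold a1; ring

theorem a2_eq_pair_sums : a2 = (s + x) * (t + y) := by
  unfold a2; ring

theorem a3_eq_pair_sums_products : a3 = (s * x) * (t + y) + (t * y) * (s + x) := by
  unfold a3; ring

theorem a5_eq_pair_products : a5 = (s * x) * (t * y) := by
  unfold a5; ring

/-- The cubic relation satisfied by `a₁,…,a₅` (affine form, `a₆ = 1`). -/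
theorem stmt_6 :
    a3^2 - a1*a3*a4 + a2*a4^2 + a1^2*a5 - 4*a2*a5 = 0 :=
  cubic_relation_of_pairs (s + x) (t + y) (s * x) (t * y)
    a1_eq_pair_sums a2_eq_pair_sums a3_eq_pair_sums_products rfl a5_eq_pair_products

end Koike
end
end

section
/- In ℂ[s,t,x,y] the identity c₂d₂ = a₂² − 2a₁a₃ + 2a₂a₄ holds (equation (9) of the paper). -/
/-! With `p = st − xy` and `q = tx − ys` we have `c₂ = p − iq` and `d₂ = p + iq`, so `i² = −1` gives
`c₂d₂ = p² + q²`, and expanding `p² + q²` yields the right-hand side. -/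

noncomputable section
namespace Koike

open MvPolynomial

theorem i_mul_self : i * i = -1 := by
  rw [i, ← C_mul, Complex.I_mul_I, C_neg, C_1]

theorem sub_mul_mul_add_mul_of_mul_self_eq_neg_one {R : Type*} [CommRing R] {j : R}
    (hj : j * j = -1) (p q : R) : (p - j * q) * (p + j * q) = p ^ 2 + q ^ 2 := by
  linear_combination (-q ^ 2) * hj

theorem c2_mul_d2_eq_sq_add_sq : c2 * d2 = (s*t - x*y) ^ 2 + (t*x - y*s) ^ 2 := by
  rw [← sub_mul_mul_add_mul_of_mul_self_eq_neg_one i_mul_self, c2, d2]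
  ring

theorem sq_add_sq_eq : (s*t - x*y) ^ 2 + (t*x - y*s) ^ 2 = a2^2 - 2*a1*a3 + 2*a2*a4 := by
  rw [a1, a2, a3, a4]
  ring

/-- `c₂d₂ = a₂² − 2a₁a₃ + 2a₂a₄`. -/
theorem stmt_10 : c2 * d2 = a2^2 - 2*a1*a3 + 2*a2*a4 := by
  rw [c2_mul_d2_eq_sq_add_sq, sq_add_sq_eq]

end Koike
end
end

section
/- For every choice of coefficients A₁,A₂,A₃,B₁,B₂,B₃,C₁,C₂,C₃ ∈ ℂ, set f₁ = a₄ − (A₁a₁ + A₂a₂ + A₃a₃), f₂ = a₅ − (B₁a₁ + B₂a₂ + B₃a₃), f₃ = 1 − (C₁a₁ + C₂a₂ + C₃a₃) in ℂ[s,t,x,y]. Then there exists a nonzero tuple (μ₁,…,μ₇) ∈ ℂ⁷ such that μ₁b₁² + μ₂b₂² + μ₃b₃² + μ₄b₁b₃ + μ₅b₁b₄ + μ₆b₃b₄ + μ₇b₄² lies in the ideal of ℂ[s,t,x,y] generated by f₁, f₂, f₃. (This produces the unique vanishing quadric Q on the genus-4 quotient curve Z.) -/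
/-!
Write `u = s + x`, `w = t + y`, `P = s x`, `Q = t y`. Then `a₁ = u + w`, `a₂ = u w`,
`a₃ = Q u + P w`, `a₄ = P + Q`, `a₅ = P Q`, while `b₁ = u - w`, `b₂ = (s - x) (t - y)`,
`b₃ = Q u - P w`, `b₄ = P - Q`. Hence each of the seven products `bᵢ bⱼ` is a quadratic form in
`a₁, …, a₆` (with `a₆ = 1` as homogenising variable). Modulo `f₁, f₂, f₃` the elements `a₄, a₅, a₆`
are linear in `a₁, a₂, a₃`, so modulo the ideal the seven products are quadratic forms in
`a₁, a₂, a₃`. These span a space of dimension at most `6 = #Sym2 (Fin 3)`, so the seven products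
are linearly dependent modulo the ideal.
-/

noncomputable section
open Submodule in
theorem exists_ne_zero_sum_smul_eq_zero_of_mem_span {K M ι κ : Type*} [Field K] [AddCommGroup M]
    [Module K M] [Fintype ι] [Fintype κ] {v : ι → M} {m : κ → M}
    (hv : ∀ j, v j ∈ span K (Set.range m)) (hcard : Fintype.card κ < Fintype.card ι) :
    ∃ μ : ι → K, μ ≠ 0 ∧ ∑ j, μ j • v j = 0 := by
  have := FiniteDimensional.span_of_finite K (Set.finite_range m)
  have hrank : (Set.range v).finrank K < Fintype.card ι :=
    calc (Set.range v).finrank K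
        ≤ (Set.range m).finrank K := finrank_mono (span_le.mpr (Set.range_subset_iff.mpr hv))
      _ ≤ Fintype.card κ := finrank_range_le_card m
      _ < Fintype.card ι := hcard
  have hdep : ¬ LinearIndependent K v := fun h =>
    hrank.ne (linearIndependent_iff_card_eq_finrank_span.mp h).symm
  obtain ⟨μ, hsum, j, hj⟩ := Fintype.not_linearIndependent_iff.mp hdep
  exact ⟨μ, fun h => hj (congrFun h j), hsum⟩

theorem Ideal.exists_ne_zero_sum_smul_mem_of_mk_mem_span {K R ι κ : Type*} [Field K] [CommRing R]
    [Algebra K R] [Fintype ι] [Fintype κ] (I : Ideal R) {q : ι → R} {m : κ → R ⧸ I}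
    (hq : ∀ j, Ideal.Quotient.mk I (q j) ∈ Submodule.span K (Set.range m))
    (hcard : Fintype.card κ < Fintype.card ι) :
    ∃ μ : ι → K, μ ≠ 0 ∧ ∑ j, μ j • q j ∈ I := by
  obtain ⟨μ, hμ, hsum⟩ := exists_ne_zero_sum_smul_eq_zero_of_mem_span hq hcard
  refine ⟨μ, hμ, Ideal.Quotient.eq_zero_iff_mem.mp ?_⟩
  rw [← Ideal.Quotient.mkₐ_eq_mk K, map_sum]
  simpa only [map_smul, Ideal.Quotient.mkₐ_eq_mk] using hsum

theorem Submodule.span_range_mul_span_range_le {K A κ : Type*} [Field K] [CommRing A] [Algebra K A]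
    (e : κ → A) :
    span K (Set.range e) * span K (Set.range e) ≤ span K (Set.range (Sym2.mul ∘ Sym2.map e)) := by
  rw [span_mul_span, span_le]
  rintro _ ⟨_, ⟨i, rfl⟩, _, ⟨j, rfl⟩, rfl⟩
  exact subset_span ⟨s(i, j), rfl⟩

theorem ofNat_mul_mem {S A : Type*} [Semiring A] [SetLike S A] [AddSubmonoidClass S A] {W : S}
    (n : ℕ) [n.AtLeastTwo] {z : A} (hz : z ∈ W) : (OfNat.ofNat n : A) * z ∈ W := by
  rw [← Nat.cast_ofNat, ← nsmul_eq_mul]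
  exact nsmul_mem hz _

namespace Koike

open MvPolynomial

theorem b1_sq : b1 ^ 2 = a1 * a1 - 4 * (a2 * a6) := by
  simp only [a1, a2, a6, b1]; ring

theorem b2_sq : b2 ^ 2 = a2 * a2 - 4 * (a1 * a3) + 4 * (a2 * a4) + 16 * (a5 * a6) := by
  simp only [a1, a2, a3, a4, a5, a6, b2]; ring

theorem b3_sq : b3 ^ 2 = a3 * a3 - 4 * (a2 * a5) := by
  simp only [a2, a3, a5, b3]; ring

theorem b1_mul_b3 : b1 * b3 = a1 * a3 - 2 * (a2 * a4) := by
  simp only [a1, a2, a3, a4, b1, b3]; ring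

theorem b1_mul_b4 : b1 * b4 = a1 * a4 - 2 * (a3 * a6) := by
  simp only [a1, a3, a4, a6, b1, b4]; ring

theorem b3_mul_b4 : b3 * b4 = 2 * (a1 * a5) - a3 * a4 := by
  simp only [a1, a3, a4, a5, b3, b4]; ring

theorem b4_sq : b4 ^ 2 = a4 * a4 - 4 * (a5 * a6) := by
  simp only [a4, a5, a6, b4]; ring

def aSpan (I : Ideal R4) : Submodule ℂ (R4 ⧸ I) :=
  Submodule.span ℂ (Set.range (Ideal.Quotient.mk I ∘ ![a1, a2, a3]))

theorem mk_mem_aSpan_of_sub_mem {I : Ideal R4} {p : R4} {c1 c2 c3 : ℂ}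
    (h : p - (C c1 * a1 + C c2 * a2 + C c3 * a3) ∈ I) : Ideal.Quotient.mk I p ∈ aSpan I := by
  rw [Ideal.Quotient.eq.mpr h]
  simp only [C_mul', map_add, ← Ideal.Quotient.mkₐ_eq_mk ℂ, map_smul]
  refine add_mem (add_mem ?_ ?_) ?_ <;> refine Submodule.smul_mem _ _ (Submodule.subset_span ?_)
  exacts [⟨0, rfl⟩, ⟨1, rfl⟩, ⟨2, rfl⟩]

def bProducts : Fin 7 → R4 := ![b1 ^ 2, b2 ^ 2, b3 ^ 2, b1 * b3, b1 * b4, b3 * b4, b4 ^ 2]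

theorem mk_bProducts_mem_aSpan_mul {I : Ideal R4} (h4 : Ideal.Quotient.mk I a4 ∈ aSpan I)
    (h5 : Ideal.Quotient.mk I a5 ∈ aSpan I) (h6 : Ideal.Quotient.mk I a6 ∈ aSpan I) (j : Fin 7) :
    Ideal.Quotient.mk I (bProducts j) ∈ aSpan I * aSpan I := by
  have h1 : Ideal.Quotient.mk I a1 ∈ aSpan I := Submodule.subset_span ⟨0, rfl⟩
  have h2 : Ideal.Quotient.mk I a2 ∈ aSpan I := Submodule.subset_span ⟨1, rfl⟩
  have h3 : Ideal.Quotient.mk I a3 ∈ aSpan I := Submodule.subset_span ⟨2, rfl⟩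
  have hmul {u v} (hu : u ∈ aSpan I) (hv : v ∈ aSpan I) : u * v ∈ aSpan I * aSpan I :=
    Submodule.mul_mem_mul hu hv
  fin_cases j
  · change Ideal.Quotient.mk I (b1 ^ 2) ∈ _
    rw [b1_sq]
    exact sub_mem (hmul h1 h1) (ofNat_mul_mem 4 (hmul h2 h6))
  · change Ideal.Quotient.mk I (b2 ^ 2) ∈ _
    rw [b2_sq]
    exact add_mem (add_mem (sub_mem (hmul h2 h2) (ofNat_mul_mem 4 (hmul h1 h3)))
      (ofNat_mul_mem 4 (hmul h2 h4))) (ofNat_mul_mem 16 (hmul h5 h6))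
  · change Ideal.Quotient.mk I (b3 ^ 2) ∈ _
    rw [b3_sq]
    exact sub_mem (hmul h3 h3) (ofNat_mul_mem 4 (hmul h2 h5))
  · change Ideal.Quotient.mk I (b1 * b3) ∈ _
    rw [b1_mul_b3]
    exact sub_mem (hmul h1 h3) (ofNat_mul_mem 2 (hmul h2 h4))
  · change Ideal.Quotient.mk I (b1 * b4) ∈ _
    rw [b1_mul_b4]
    exact sub_mem (hmul h1 h4) (ofNat_mul_mem 2 (hmul h3 h6))
  · change Ideal.Quotient.mk I (b3 * b4) ∈ _
    rw [b3_mul_b4]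
    exact sub_mem (ofNat_mul_mem 2 (hmul h1 h5)) (hmul h3 h4)
  · change Ideal.Quotient.mk I (b4 ^ 2) ∈ _
    rw [b4_sq]
    exact sub_mem (hmul h4 h4) (ofNat_mul_mem 4 (hmul h5 h6))

theorem exists_ne_zero_combination_mem_of_mk_mem_aSpan {I : Ideal R4}
    (h4 : Ideal.Quotient.mk I a4 ∈ aSpan I) (h5 : Ideal.Quotient.mk I a5 ∈ aSpan I)
    (h6 : Ideal.Quotient.mk I a6 ∈ aSpan I) :
    ∃ μ : Fin 7 → ℂ, μ ≠ 0 ∧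
      C (μ 0) * b1^2 + C (μ 1) * b2^2 + C (μ 2) * b3^2 +
        C (μ 3) * (b1*b3) + C (μ 4) * (b1*b4) + C (μ 5) * (b3*b4) + C (μ 6) * b4^2 ∈ I := by
  have hquad (j : Fin 7) : Ideal.Quotient.mk I (bProducts j) ∈
      Submodule.span ℂ (Set.range (Sym2.mul ∘ Sym2.map (Ideal.Quotient.mk I ∘ ![a1, a2, a3]))) :=
    Submodule.span_range_mul_span_range_le _ (mk_bProducts_mem_aSpan_mul h4 h5 h6 j)
  obtain ⟨μ, hμ, hmem⟩ := I.exists_ne_zero_sum_smul_mem_of_mk_mem_span hquad (by decide)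
  exact ⟨μ, hμ, by simpa [Fin.sum_univ_seven, bProducts, C_mul'] using hmem⟩

/-- For every choice of coefficients, some nontrivial linear combination of the
seven products `b₁², b₂², b₃², b₁b₃, b₁b₄, b₃b₄, b₄²` lies in the ideal
generated by `f₁, f₂, f₃`: the unique vanishing quadric `Q`. -/
theorem stmt_15 (A1 A2 A3 B1 B2 B3 C1 C2 C3 : ℂ) :
    ∃ μ : Fin 7 → ℂ, μ ≠ 0 ∧
      C (μ 0) * b1^2 + C (μ 1) * b2^2 + C (μ 2) * b3^2 +
        C (μ 3) * (b1*b3) + C (μ 4) * (b1*b4) + C (μ 5) * (b3*b4) +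
        C (μ 6) * b4^2 ∈
      Ideal.span {a4 - (C A1 * a1 + C A2 * a2 + C A3 * a3),
                  a5 - (C B1 * a1 + C B2 * a2 + C B3 * a3),
                  1 - (C C1 * a1 + C C2 * a2 + C C3 * a3)} :=
  exists_ne_zero_combination_mem_of_mk_mem_aSpan
    (mk_mem_aSpan_of_sub_mem (Ideal.subset_span (Set.mem_insert _ _)))
    (mk_mem_aSpan_of_sub_mem (Ideal.subset_span (Set.mem_insert_of_mem _ (Set.mem_insert _ _))))
    (mk_mem_aSpan_of_sub_mem (p := a6)
      (Ideal.subset_span (Set.mem_insert_of_mem _ (Set.mem_insert_of_mem _ rfl))))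

end Koike
end
end

section
/- Let s₀,s₁,t₀,t₁,x₀,x₁,y₀,y₁ ∈ ℂ be such that (s₀,s₁) ≠ (0,0), (t₀,t₁) ≠ (0,0), (x₀,x₁) ≠ (0,0), and (y₀,y₁) ≠ (0,0). Then the six values A₁, A₂, A₃, A₄, A₅, A₆ evaluated at (s₀,s₁,t₀,t₁,x₀,x₁,y₀,y₁) are not all zero. (Hence the linear system V(1) spanned by a₁,…,a₆ is base point free on (ℙ¹)⁴, so it defines a morphism φ : (ℙ¹)⁴ → ℙ⁵.) -/
/-!
A common zero of `A₆ = s₀t₀x₀y₀` has a vanishing `0`-coordinate. The forms are invariant under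
the cyclic shift `s → t → x → y → s` (the symmetric forms `A₁, A₃, A₅, A₆` trivially; `A₂` sums
over the edges of the 4-cycle `s t x y` and `A₄` over its diagonals), so we may take `s₀ = 0`.
Dividing by `s₁` leaves a small system in `t, x, y`: if `t₀ = 0` it says that
`(x₀ + x₁z)(y₀ + y₁z) = 0`, so `x` or `y` vanishes; if `t₀ ≠ 0` it forces `y₀ = x₀ = 0`, and
then `A₃` reduces to `s₁t₀x₁y₁ ≠ 0`.
-/

variable {R : Type*} [CommRing R]

def IsCommonZero (s0 s1 t0 t1 x0 x1 y0 y1 : R) : Prop :=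
  s1*t0*x0*y0 + s0*t1*x0*y0 + s0*t0*x1*y0 + s0*t0*x0*y1 = 0 ∧
  s1*t1*x0*y0 + s0*t1*x1*y0 + s0*t0*x1*y1 + s1*t0*x0*y1 = 0 ∧
  s0*t1*x1*y1 + s1*t0*x1*y1 + s1*t1*x0*y1 + s1*t1*x1*y0 = 0 ∧
  s1*t0*x1*y0 + s0*t1*x0*y1 = 0 ∧
  s1*t1*x1*y1 = 0 ∧
  s0*t0*x0*y0 = 0

namespace IsCommonZero

variable {s0 s1 t0 t1 x0 x1 y0 y1 : R}

theorem rotate (h : IsCommonZero s0 s1 t0 t1 x0 x1 y0 y1) :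
    IsCommonZero t0 t1 x0 x1 y0 y1 s0 s1 := by
  obtain ⟨h1, h2, h3, h4, h5, h6⟩ := h
  exact ⟨by linear_combination h1, by linear_combination h2, by linear_combination h3,
    by linear_combination h4, by linear_combination h5, by linear_combination h6⟩

end IsCommonZero

variable [NoZeroDivisors R]

/-- The three products are the coefficients of `(x₀ + x₁z)(y₀ + y₁z)`. -/
theorem eq_zero_or_eq_zero_of_mul_linear_forms_eq_zero {x0 x1 y0 y1 : R}
    (h0 : x0*y0 = 0) (h1 : x0*y1 + x1*y0 = 0) (h2 : x1*y1 = 0) :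
    (x0 = 0 ∧ x1 = 0) ∨ (y0 = 0 ∧ y1 = 0) := by
  by_cases hx0 : x0 = 0
  · subst hx0
    rcases mul_eq_zero.mp h2 with hx1 | hy1
    · exact Or.inl ⟨rfl, hx1⟩
    · subst hy1
      rcases mul_eq_zero.mp (by simpa using h1 : x1 * y0 = 0) with hx1 | hy0
      · exact Or.inl ⟨rfl, hx1⟩
      · exact Or.inr ⟨hy0, rfl⟩
  · have hy0 : y0 = 0 := (mul_eq_zero.mp h0).resolve_left hx0
    subst hy0
    exact Or.inr ⟨rfl, (mul_eq_zero.mp (by simpa using h1 : x0 * y1 = 0)).resolve_left hx0⟩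

theorem IsCommonZero.false_of_left_eq_zero {s0 s1 t0 t1 x0 x1 y0 y1 : R}
    (hs : ¬(s0 = 0 ∧ s1 = 0)) (ht : ¬(t0 = 0 ∧ t1 = 0))
    (hx : ¬(x0 = 0 ∧ x1 = 0)) (hy : ¬(y0 = 0 ∧ y1 = 0))
    (hs0 : s0 = 0) (h : IsCommonZero s0 s1 t0 t1 x0 x1 y0 y1) : False := by
  have hs1 : s1 ≠ 0 := fun hs1 => hs ⟨hs0, hs1⟩
  subst hs0
  obtain ⟨h1, h2, h3, h4, h5, -⟩ := h
  simp only [zero_mul, add_zero, mul_assoc, mul_eq_zero, hs1, false_or] at h1 h4 h5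
  have h2 : t1*x0*y0 + t0*x0*y1 = 0 :=
    (mul_eq_zero.mp (by linear_combination h2 : s1 * _ = 0)).resolve_left hs1
  have h3 : t0*x1*y1 + t1*x0*y1 + t1*x1*y0 = 0 :=
    (mul_eq_zero.mp (by linear_combination h3 : s1 * _ = 0)).resolve_left hs1
  by_cases ht0 : t0 = 0
  · have ht1 : t1 ≠ 0 := fun ht1 => ht ⟨ht0, ht1⟩
    subst ht0
    refine (eq_zero_or_eq_zero_of_mul_linear_forms_eq_zero ?_ ?_ ?_).elim hx hy
    · exact (mul_eq_zero.mp (by linear_combination h2 : t1 * _ = 0)).resolve_left ht1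
    · exact (mul_eq_zero.mp (by linear_combination h3 : t1 * _ = 0)).resolve_left ht1
    · simpa [ht1] using h5
  · have hy0 : y0 = 0 := by
      by_contra hy0
      simp only [ht0, hy0, false_or, or_false] at h1 h4
      exact hx ⟨h1, h4⟩
    have hy1 : y1 ≠ 0 := fun hy1 => hy ⟨hy0, hy1⟩
    have hx0 : x0 = 0 := by
      simpa [hy0, ht0, hy1] using h2
    have hx1 : x1 ≠ 0 := fun hx1 => hx ⟨hx0, hx1⟩
    simp [hy0, hx0, ht0, hx1, hy1] at h3

/-- The forms `A₁,…,A₆` (the homogeneous versions of `a₁,…,a₆`) have no common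
zero with all four coordinate pairs nonzero: the linear system `V(1)` is base
point free on `(ℙ¹)⁴`. -/
theorem stmt_19 (s0 s1 t0 t1 x0 x1 y0 y1 : ℂ)
    (hs : ¬(s0 = 0 ∧ s1 = 0)) (ht : ¬(t0 = 0 ∧ t1 = 0))
    (hx : ¬(x0 = 0 ∧ x1 = 0)) (hy : ¬(y0 = 0 ∧ y1 = 0)) :
    ¬(s1*t0*x0*y0 + s0*t1*x0*y0 + s0*t0*x1*y0 + s0*t0*x0*y1 = 0 ∧
      s1*t1*x0*y0 + s0*t1*x1*y0 + s0*t0*x1*y1 + s1*t0*x0*y1 = 0 ∧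
      s0*t1*x1*y1 + s1*t0*x1*y1 + s1*t1*x0*y1 + s1*t1*x1*y0 = 0 ∧
      s1*t0*x1*y0 + s0*t1*x0*y1 = 0 ∧
      s1*t1*x1*y1 = 0 ∧
      s0*t0*x0*y0 = 0) := by
  intro h
  change IsCommonZero s0 s1 t0 t1 x0 x1 y0 y1 at h
  have h6 := h.2.2.2.2.2
  simp only [mul_eq_zero, or_assoc] at h6
  rcases h6 with hs0 | ht0 | hx0 | hy0
  · exact h.false_of_left_eq_zero hs ht hx hy hs0
  · exact h.rotate.false_of_left_eq_zero ht hx hy hs ht0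
  · exact h.rotate.rotate.false_of_left_eq_zero hx hy hs ht hx0
  · exact h.rotate.rotate.rotate.false_of_left_eq_zero hy hs ht hx hy0
end
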